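/- If f ∈ C^{2,2}([0,1]²) ∩ C^{1,1}([0,1]²), then for all n, m ≥ j ≥ 2 and (x,y) ∈ [0,1]², |f(x,y) − B_{n,m,j}(f;x,y)| ≤ x(1−x)/(2n) ‖f^{(2,0)}‖ + y(1−y)/(2m) ‖f^{(0,2)}‖ + ((j−1)/n) ‖f^{(1,0)}‖ + ((j−1)/m) ‖f^{(0,1)}‖. -/

import Mathlib

/-!
Writing `A_n` for the univariate AKR operator acting in one variable,
`f - B_{n,m,j} f = (f - A_n^x f) + A_n^x (f - A_m^y f)`, and `A_n` is positive and reproduces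
constants, so everything reduces to the univariate estimate
`|g - A_n g| ≤ x(1-x)/(2n) ‖g''‖ + (j-1)/n ‖g'‖`. That estimate goes through the Bernstein
operator `B_n`: `|g - B_n g|` is bounded by Taylor's formula and the Bernstein variance
`x(1-x)/n`, and `|B_n g - A_n g|` by the mean value theorem, since every node `t_{n,k}^j` lies
within `(j-1)/n` of `k/n`: it is the geometric mean of the ratios `(k-i)/(n-i)`, `i < j`, which
all lie in `[(k-j+1)/n, k/n]`.
-/

open Set Finset

/-- Bernstein basis polynomial `p_{n,k}(x) = C(n,k) x^k (1-x)^{n-k}`. -/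
noncomputable def bp (n k : ℕ) (x : ℝ) : ℝ :=
  (n.choose k : ℝ) * x ^ k * (1 - x) ^ (n - k)

/-- AKR node `t_{n,k}^j = (k(k-1)⋯(k-j+1)/(n(n-1)⋯(n-j+1)))^{1/j}`. -/
noncomputable def akrNode (n j k : ℕ) : ℝ :=
  ((∏ i ∈ Finset.range j, ((k : ℝ) - i)) / (∏ i ∈ Finset.range j, ((n : ℝ) - i))) ^ ((j : ℝ)⁻¹)

/-- Classical Bernstein operator. -/
noncomputable def bern (n : ℕ) (f : ℝ → ℝ) (x : ℝ) : ℝ :=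
  ∑ k ∈ Finset.range (n + 1), f ((k : ℝ) / n) * bp n k x

/-- Aldaz–Kounchev–Render operator. -/
noncomputable def akr (n j : ℕ) (f : ℝ → ℝ) (x : ℝ) : ℝ :=
  ∑ k ∈ Finset.range (n + 1), f (akrNode n j k) * bp n k x

/-- Bivariate tensor-product Bernstein operator. -/
noncomputable def bern2 (n m : ℕ) (f : ℝ → ℝ → ℝ) (x y : ℝ) : ℝ :=
  ∑ i ∈ Finset.range (n + 1), ∑ k ∈ Finset.range (m + 1),
    f ((i : ℝ) / n) ((k : ℝ) / m) * bp n i x * bp m k y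

/-- Bivariate tensor-product AKR operator. -/
noncomputable def akr2 (n m j : ℕ) (f : ℝ → ℝ → ℝ) (x y : ℝ) : ℝ :=
  ∑ i ∈ Finset.range (n + 1), ∑ k ∈ Finset.range (m + 1),
    f (akrNode n j i) (akrNode m j k) * bp n i x * bp m k y

theorem Convex.abs_sub_sub_mul_le {s : Set ℝ} (hs : Convex ℝ s) {g g' g'' : ℝ → ℝ} {M : ℝ}
    (hg : ∀ x ∈ s, HasDerivWithinAt g (g' x) s x)
    (hg' : ∀ x ∈ s, HasDerivWithinAt g' (g'' x) s x) (hM : ∀ x ∈ s, |g'' x| ≤ M)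
    {x t : ℝ} (hx : x ∈ s) (ht : t ∈ s) :
    |g t - g x - g' x * (t - x)| ≤ M / 2 * (t - x) ^ 2 := by
  set d := t - x
  have hline : MapsTo (fun u : ℝ => x + u * d) (Icc 0 1) s :=
    fun u hu => hs.add_smul_sub_mem hx ht hu
  -- The remainder along the segment vanishes at `u = 0` and, by the mean value theorem for `g'`,
  -- has derivative bounded by `M u d²`; the fencing theorem then bounds it by `M u² d² / 2`.
  have hderiv : ∀ u ∈ Icc (0 : ℝ) 1,
      HasDerivWithinAt (fun u => g (x + u * d) - g x - g' x * (u * d))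
        ((g' (x + u * d) - g' x) * d) (Icc 0 1) u := by
    intro u hu
    have hlin : HasDerivWithinAt (fun u : ℝ => x + u * d) d (Icc 0 1) u := by
      simpa using ((hasDerivAt_id u).mul_const d).const_add x |>.hasDerivWithinAt
    have hcomp := (hg _ (hline hu)).comp u hlin hline
    have hlin' : HasDerivWithinAt (fun u : ℝ => u * d) d (Icc 0 1) u := by
      simpa using ((hasDerivAt_id u).mul_const d).hasDerivWithinAt
    exact ((hcomp.sub_const (g x)).sub (hlin'.const_mul (g' x))).congr_deriv (by simp only; ring)
  have hbound : ∀ u ∈ Ico (0 : ℝ) 1, ‖(g' (x + u * d) - g' x) * d‖ ≤ M * u * d ^ 2 := by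
    intro u hu
    have hmvt := hs.norm_image_sub_le_of_norm_hasDerivWithin_le hg' hM hx
      (hline (Ico_subset_Icc_self hu))
    calc ‖(g' (x + u * d) - g' x) * d‖ ≤ M * ‖x + u * d - x‖ * ‖d‖ := by
          rw [norm_mul]; gcongr
      _ = M * u * d ^ 2 := by
          rw [add_sub_cancel_left, norm_mul, Real.norm_of_nonneg hu.1, Real.norm_eq_abs,
            ← sq_abs d]
          ring
  have := image_norm_le_of_norm_deriv_right_le_deriv_boundary
    (fun u hu => (hderiv u hu).continuousWithinAt)
    (fun u hu => (hderiv u (Ico_subset_Icc_self hu)).mono_of_mem_nhdsWithin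
      (Icc_mem_nhdsGE_of_mem hu))
    (B := fun u => M / 2 * u ^ 2 * d ^ 2) (by simp)
    (fun u => (((hasDerivAt_pow 2 u).const_mul (M / 2)).mul_const (d ^ 2)).congr_deriv (by ring))
    hbound (right_mem_Icc.2 zero_le_one)
  simpa [d] using this

lemma bp_eq_eval (n k : ℕ) (x : ℝ) : bp n k x = (bernsteinPolynomial ℝ n k).eval x := by
  simp [bp, bernsteinPolynomial]

lemma bp_nonneg (n k : ℕ) {x : ℝ} (hx : x ∈ Icc (0:ℝ) 1) : 0 ≤ bp n k x := by
  obtain ⟨h0, h1⟩ := hx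
  have : 0 ≤ 1 - x := sub_nonneg.2 h1
  unfold bp
  positivity

lemma sum_bp (n : ℕ) (x : ℝ) : ∑ k ∈ range (n + 1), bp n k x = 1 := by
  simpa [bp_eq_eval, Polynomial.eval_finsetSum] using
    congrArg (Polynomial.eval x) (bernsteinPolynomial.sum ℝ n)

lemma sum_div_sub_mul_bp {n : ℕ} (hn : n ≠ 0) (x : ℝ) :
    ∑ k ∈ range (n + 1), ((k : ℝ) / n - x) * bp n k x = 0 := by
  have h := congrArg (Polynomial.eval x) (bernsteinPolynomial.sum_smul ℝ n)
  simp only [Polynomial.eval_finsetSum, Polynomial.eval_mul, Polynomial.eval_X,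
    Polynomial.eval_natCast, nsmul_eq_mul, ← bp_eq_eval] at h
  have hn' : (n : ℝ) ≠ 0 := by exact_mod_cast hn
  have : ∑ k ∈ range (n + 1), ((k : ℝ) / n - x) * bp n k x =
      (∑ k ∈ range (n + 1), (k : ℝ) * bp n k x) / n - x * ∑ k ∈ range (n + 1), bp n k x := by
    rw [sum_div, mul_sum, ← sum_sub_distrib]
    exact sum_congr rfl fun k _ => by ring
  rw [this, h, sum_bp]
  field_simp
  ring

lemma sum_div_sub_sq_mul_bp {n : ℕ} (hn : n ≠ 0) (x : ℝ) :
    ∑ k ∈ range (n + 1), ((k : ℝ) / n - x) ^ 2 * bp n k x = x * (1 - x) / n := by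
  have h := congrArg (Polynomial.eval x) (bernsteinPolynomial.variance ℝ n)
  simp only [Polynomial.eval_finsetSum, Polynomial.eval_mul, Polynomial.eval_pow,
    Polynomial.eval_sub, Polynomial.eval_X, Polynomial.eval_natCast,
    Polynomial.eval_one, nsmul_eq_mul, ← bp_eq_eval] at h
  have hn' : (n : ℝ) ≠ 0 := by exact_mod_cast hn
  have : ∑ k ∈ range (n + 1), ((k : ℝ) / n - x) ^ 2 * bp n k x =
      (∑ k ∈ range (n + 1), ((n : ℝ) * x - k) ^ 2 * bp n k x) / n ^ 2 := by
    rw [sum_div]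
    refine sum_congr rfl fun k _ => ?_
    field_simp
    ring
  rw [this, h]
  field_simp

lemma abs_sum_mul_bp_le {n : ℕ} {x : ℝ} (hx : x ∈ Icc (0:ℝ) 1) {a b : ℕ → ℝ}
    (hab : ∀ k ∈ range (n + 1), |a k| ≤ b k) :
    |∑ k ∈ range (n + 1), a k * bp n k x| ≤ ∑ k ∈ range (n + 1), b k * bp n k x :=
  (abs_sum_le_sum_abs _ _).trans <| sum_le_sum fun k hk => by
    rw [abs_mul, abs_of_nonneg (bp_nonneg n k hx)]
    exact mul_le_mul_of_nonneg_right (hab k hk) (bp_nonneg n k hx)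

lemma prod_range_rpow_inv_mem_Icc {j : ℕ} (hj : j ≠ 0) {a b : ℝ} (ha : 0 ≤ a) {c : ℕ → ℝ}
    (hc : ∀ i ∈ range j, c i ∈ Icc a b) : (∏ i ∈ range j, c i) ^ ((j : ℝ)⁻¹) ∈ Icc a b := by
  obtain ⟨ha₀, hb₀⟩ := hc 0 (mem_range.2 (Nat.pos_of_ne_zero hj))
  have hlo : a ^ j ≤ ∏ i ∈ range j, c i := by
    simpa using prod_le_prod (fun _ _ => ha) fun i hi => (hc i hi).1
  have hhi : ∏ i ∈ range j, c i ≤ b ^ j := by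
    simpa using prod_le_prod (fun i hi => ha.trans (hc i hi).1) fun i hi => (hc i hi).2
  constructor
  · calc a = (a ^ j) ^ ((j : ℝ)⁻¹) := (Real.pow_rpow_inv_natCast ha hj).symm
      _ ≤ _ := Real.rpow_le_rpow (by positivity) hlo (by positivity)
  · calc _ ≤ (b ^ j) ^ ((j : ℝ)⁻¹) :=
          Real.rpow_le_rpow ((pow_nonneg ha j).trans hlo) hhi (by positivity)
      _ = b := Real.pow_rpow_inv_natCast (ha.trans (ha₀.trans hb₀)) hj

lemma akrNode_of_lt {n j k : ℕ} (hj : j ≠ 0) (hk : k < j) : akrNode n j k = 0 := by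
  rw [akrNode, prod_eq_zero (mem_range.2 hk) (sub_self _), zero_div,
    Real.zero_rpow (by simpa using hj)]

lemma akrNode_mem_Icc {n j k : ℕ} (hj : j ≠ 0) (hjk : j ≤ k) (hkn : k ≤ n) :
    akrNode n j k ∈ Icc (((k : ℝ) - j + 1) / n) ((k : ℝ) / n) := by
  have hn : (0 : ℝ) < n := by exact_mod_cast (by omega : 0 < n)
  have hjk' : (j : ℝ) ≤ k := by exact_mod_cast hjk
  have hkn' : (k : ℝ) ≤ n := by exact_mod_cast hkn
  have hfactor : ∀ i ∈ range j,
      ((k : ℝ) - i) / (n - i) ∈ Icc (((k : ℝ) - j + 1) / n) (k / n) := by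
    intro i hi
    have hij : (i : ℝ) + 1 ≤ j := by exact_mod_cast mem_range.1 hi
    have hi0 : (0 : ℝ) ≤ i := i.cast_nonneg
    have hni : (0 : ℝ) < n - i := by linarith
    constructor
    · rw [div_le_div_iff₀ hn hni]; nlinarith
    · rw [div_le_div_iff₀ hni hn]; nlinarith
  rw [akrNode, ← prod_div_distrib]
  exact prod_range_rpow_inv_mem_Icc hj (div_nonneg (by linarith) hn.le) hfactor

lemma akrNode_mem_unitInterval {n j k : ℕ} (hj : j ≠ 0) (hkn : k ≤ n) :
    akrNode n j k ∈ Icc (0 : ℝ) 1 := by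
  rcases lt_or_ge k j with hk | hk
  · simp [akrNode_of_lt hj hk]
  · have h := akrNode_mem_Icc hj hk hkn
    have hjk' : (j : ℝ) ≤ k := by exact_mod_cast hk
    exact ⟨(div_nonneg (by linarith) n.cast_nonneg).trans h.1,
      h.2.trans (div_le_one_of_le₀ (by exact_mod_cast hkn) n.cast_nonneg)⟩

lemma abs_div_sub_akrNode_le {n j k : ℕ} (hj : j ≠ 0) (hkn : k ≤ n) :
    |(k : ℝ) / n - akrNode n j k| ≤ ((j : ℝ) - 1) / n := by
  rcases lt_or_ge k j with hk | hk
  · have hk' : (k : ℝ) ≤ j - 1 := by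
      have : (k : ℝ) + 1 ≤ j := by exact_mod_cast hk
      linarith
    rw [akrNode_of_lt hj hk, sub_zero, abs_of_nonneg (by positivity)]
    gcongr
  · have h := akrNode_mem_Icc hj hk hkn
    rw [abs_of_nonneg (sub_nonneg.2 h.2)]
    have : (k : ℝ) / n - ((k : ℝ) - j + 1) / n = ((j : ℝ) - 1) / n := by ring
    linarith [h.1]

lemma natCast_div_mem_unitInterval {n k : ℕ} (hkn : k ≤ n) : (k : ℝ) / n ∈ Icc (0 : ℝ) 1 :=
  ⟨by positivity, div_le_one_of_le₀ (by exact_mod_cast hkn) n.cast_nonneg⟩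


section OperatorEstimates

variable {g g' g'' : ℝ → ℝ}

lemma abs_sub_bern_le {n : ℕ} (hn : n ≠ 0)
    (hg : ∀ s ∈ Icc (0 : ℝ) 1, HasDerivWithinAt g (g' s) (Icc 0 1) s)
    (hg' : ∀ s ∈ Icc (0 : ℝ) 1, HasDerivWithinAt g' (g'' s) (Icc 0 1) s)
    {M : ℝ} (hM : ∀ s ∈ Icc (0 : ℝ) 1, |g'' s| ≤ M) {x : ℝ} (hx : x ∈ Icc (0 : ℝ) 1) :
    |g x - bern n g x| ≤ x * (1 - x) / (2 * n) * M := by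
  have hsplit : g x - bern n g x =
      -∑ k ∈ range (n + 1), (g (k / n) - g x - g' x * (k / n - x)) * bp n k x := by
    have hexpand : ∑ k ∈ range (n + 1), (g (k / n) - g x - g' x * (k / n - x)) * bp n k x =
        bern n g x - g x * ∑ k ∈ range (n + 1), bp n k x
          - g' x * ∑ k ∈ range (n + 1), ((k : ℝ) / n - x) * bp n k x := by
      rw [bern, mul_sum, mul_sum, ← sum_sub_distrib, ← sum_sub_distrib]
      exact sum_congr rfl fun k _ => by ring
    rw [hexpand, sum_bp, sum_div_sub_mul_bp hn]
    ring
  rw [hsplit, abs_neg]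
  calc _ ≤ ∑ k ∈ range (n + 1), M / 2 * ((k : ℝ) / n - x) ^ 2 * bp n k x :=
        abs_sum_mul_bp_le hx fun k hk => (convex_Icc 0 1).abs_sub_sub_mul_le hg hg' hM hx
          (natCast_div_mem_unitInterval (mem_range_succ_iff.1 hk))
    _ = x * (1 - x) / (2 * n) * M := by
        simp only [mul_assoc, ← mul_sum, sum_div_sub_sq_mul_bp hn]
        ring

lemma abs_bern_sub_akr_le {n j : ℕ} (hj : j ≠ 0)
    (hg : ∀ s ∈ Icc (0 : ℝ) 1, HasDerivWithinAt g (g' s) (Icc 0 1) s)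
    {M : ℝ} (hM : ∀ s ∈ Icc (0 : ℝ) 1, |g' s| ≤ M) {x : ℝ} (hx : x ∈ Icc (0 : ℝ) 1) :
    |bern n g x - akr n j g x| ≤ ((j : ℝ) - 1) / n * M := by
  have hM0 : 0 ≤ M := (abs_nonneg _).trans (hM 0 (left_mem_Icc.2 zero_le_one))
  have hterm : ∀ k ∈ range (n + 1),
      |g (k / n) - g (akrNode n j k)| ≤ M * (((j : ℝ) - 1) / n) := by
    intro k hk
    have hkn := mem_range_succ_iff.1 hk
    calc |g (k / n) - g (akrNode n j k)| ≤ M * |(k : ℝ) / n - akrNode n j k| :=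
          (convex_Icc 0 1).norm_image_sub_le_of_norm_hasDerivWithin_le hg hM
            (akrNode_mem_unitInterval hj hkn) (natCast_div_mem_unitInterval hkn)
      _ ≤ M * (((j : ℝ) - 1) / n) := by gcongr; exact abs_div_sub_akrNode_le hj hkn
  rw [bern, akr, ← sum_sub_distrib]
  simp only [← sub_mul]
  calc _ ≤ ∑ k ∈ range (n + 1), M * (((j : ℝ) - 1) / n) * bp n k x :=
        abs_sum_mul_bp_le hx hterm
    _ = ((j : ℝ) - 1) / n * M := by rw [← mul_sum, sum_bp, mul_one, mul_comm]

lemma abs_sub_akr_le {n j : ℕ} (hj : j ≠ 0) (hn : n ≠ 0)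
    (hg : ∀ s ∈ Icc (0 : ℝ) 1, HasDerivWithinAt g (g' s) (Icc 0 1) s)
    (hg' : ∀ s ∈ Icc (0 : ℝ) 1, HasDerivWithinAt g' (g'' s) (Icc 0 1) s)
    {M₁ M₂ : ℝ} (hM₁ : ∀ s ∈ Icc (0 : ℝ) 1, |g' s| ≤ M₁)
    (hM₂ : ∀ s ∈ Icc (0 : ℝ) 1, |g'' s| ≤ M₂)
    {x : ℝ} (hx : x ∈ Icc (0 : ℝ) 1) :
    |g x - akr n j g x| ≤ x * (1 - x) / (2 * n) * M₂ + ((j : ℝ) - 1) / n * M₁ :=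
  (abs_sub_le _ (bern n g x) _).trans <|
    add_le_add (abs_sub_bern_le hn hg hg' hM₂ hx) (abs_bern_sub_akr_le hj hg hM₁ hx)

end OperatorEstimates

lemma abs_akr_le {n j : ℕ} (hj : j ≠ 0) {h : ℝ → ℝ} {C : ℝ}
    (hC : ∀ u ∈ Icc (0 : ℝ) 1, |h u| ≤ C) {x : ℝ} (hx : x ∈ Icc (0 : ℝ) 1) : |akr n j h x| ≤ C :=
  calc |akr n j h x| ≤ ∑ k ∈ range (n + 1), C * bp n k x :=
        abs_sum_mul_bp_le hx fun k hk =>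
          hC _ (akrNode_mem_unitInterval hj (mem_range_succ_iff.1 hk))
    _ = C := by rw [← mul_sum, sum_bp, mul_one]

lemma sub_akr2_eq (n m j : ℕ) (f : ℝ → ℝ → ℝ) (x y : ℝ) :
    f x y - akr2 n m j f x y =
      (f x y - akr n j (f · y) x) + akr n j (fun u => f u y - akr m j (f u) y) x := by
  simp only [akr2, akr, sub_mul, sum_sub_distrib, sum_mul, mul_right_comm _ (bp m _ y)]
  ring

lemma abs_le_iSup_of_continuousOn {h : ℝ → ℝ → ℝ}
    (hc : ContinuousOn (fun p : ℝ × ℝ => h p.1 p.2) (Icc (0 : ℝ) 1 ×ˢ Icc (0 : ℝ) 1))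
    {a b : ℝ} (ha : a ∈ Icc (0 : ℝ) 1) (hb : b ∈ Icc (0 : ℝ) 1) :
    |h a b| ≤ ⨆ p : Icc (0 : ℝ) 1 × Icc (0 : ℝ) 1, |h p.1 p.2| := by
  have hcont : Continuous fun p : Icc (0 : ℝ) 1 × Icc (0 : ℝ) 1 => |h p.1 p.2| :=
    (hc.comp_continuous (by fun_prop) fun p => mk_mem_prod p.1.2 p.2.2).abs
  exact le_ciSup (isCompact_range hcont).bddAbove
    (⟨⟨a, ha⟩, ⟨b, hb⟩⟩ : Icc (0 : ℝ) 1 × Icc (0 : ℝ) 1)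

theorem stmt18 (n m j : ℕ) (hj : 2 ≤ j) (hn : j ≤ n) (hm : j ≤ m)
    (f fx fy fxx fyy : ℝ → ℝ → ℝ)
    (hfx : ∀ y ∈ Icc (0:ℝ) 1, ∀ x ∈ Icc (0:ℝ) 1,
      HasDerivWithinAt (fun u => f u y) (fx x y) (Icc 0 1) x)
    (hfxx : ∀ y ∈ Icc (0:ℝ) 1, ∀ x ∈ Icc (0:ℝ) 1,
      HasDerivWithinAt (fun u => fx u y) (fxx x y) (Icc 0 1) x)
    (hfy : ∀ x ∈ Icc (0:ℝ) 1, ∀ y ∈ Icc (0:ℝ) 1,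
      HasDerivWithinAt (fun v => f x v) (fy x y) (Icc 0 1) y)
    (hfyy : ∀ x ∈ Icc (0:ℝ) 1, ∀ y ∈ Icc (0:ℝ) 1,
      HasDerivWithinAt (fun v => fy x v) (fyy x y) (Icc 0 1) y)
    (hcx : ContinuousOn (fun p : ℝ × ℝ => fx p.1 p.2) (Set.Icc (0:ℝ) 1 ×ˢ Set.Icc (0:ℝ) 1))
    (hcy : ContinuousOn (fun p : ℝ × ℝ => fy p.1 p.2) (Set.Icc (0:ℝ) 1 ×ˢ Set.Icc (0:ℝ) 1))
    (hcxx : ContinuousOn (fun p : ℝ × ℝ => fxx p.1 p.2) (Set.Icc (0:ℝ) 1 ×ˢ Set.Icc (0:ℝ) 1))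
    (hcyy : ContinuousOn (fun p : ℝ × ℝ => fyy p.1 p.2) (Set.Icc (0:ℝ) 1 ×ˢ Set.Icc (0:ℝ) 1)) :
    ∀ x ∈ Icc (0:ℝ) 1, ∀ y ∈ Icc (0:ℝ) 1,
      |f x y - akr2 n m j f x y| ≤
        x * (1 - x) / (2 * n) *
            (⨆ p : Set.Icc (0:ℝ) 1 × Set.Icc (0:ℝ) 1, |fxx p.1 p.2|) +
          y * (1 - y) / (2 * m) *
            (⨆ p : Set.Icc (0:ℝ) 1 × Set.Icc (0:ℝ) 1, |fyy p.1 p.2|) +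
          (((j : ℝ) - 1) / n) *
            (⨆ p : Set.Icc (0:ℝ) 1 × Set.Icc (0:ℝ) 1, |fx p.1 p.2|) +
          (((j : ℝ) - 1) / m) *
            (⨆ p : Set.Icc (0:ℝ) 1 × Set.Icc (0:ℝ) 1, |fy p.1 p.2|) := by
  intro x hx y hy
  have hj' : j ≠ 0 := by omega
  have hx_err := abs_sub_akr_le hj' (by omega : n ≠ 0) (hfx y hy) (hfxx y hy)
    (fun u hu => abs_le_iSup_of_continuousOn hcx hu hy)
    (fun u hu => abs_le_iSup_of_continuousOn hcxx hu hy) hx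
  have hy_err : ∀ u ∈ Icc (0:ℝ) 1, |f u y - akr m j (f u) y| ≤
      y * (1 - y) / (2 * m) * (⨆ p : Set.Icc (0:ℝ) 1 × Set.Icc (0:ℝ) 1, |fyy p.1 p.2|) +
        ((j : ℝ) - 1) / m * (⨆ p : Set.Icc (0:ℝ) 1 × Set.Icc (0:ℝ) 1, |fy p.1 p.2|) :=
    fun u hu => abs_sub_akr_le hj' (by omega : m ≠ 0) (hfy u hu) (hfyy u hu)
      (fun v hv => abs_le_iSup_of_continuousOn hcy hu hv)
      (fun v hv => abs_le_iSup_of_continuousOn hcyy hu hv) hy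
  rw [sub_akr2_eq]
  calc _ ≤ |f x y - akr n j (f · y) x| + |akr n j (fun u => f u y - akr m j (f u) y) x| :=
        abs_add_le _ _
    _ ≤ _ := by linarith [abs_akr_le (n := n) hj' hy_err hx]
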